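/- arXiv:0802.4192 — 2 statements merged into one kernel-verified Lean document; each statement's English description precedes it below -/
import Mathlib

section
/- Let H be a real Hilbert space, ℓ : H → ℝ a linear map, s ∈ H, n ≥ 1 an integer, λ > 0, and M a collection of finite-dimensional subspaces of H. Assume that for all m, m' ∈ M, ‖w_{m+m'}‖² ≤ λ (D_m + D_{m'}), where m+m' is the subspace spanned by m ∪ m'. Let γ ∈ (0,1) and K > 1 satisfy K(1−γ) > 2/γ + 1. Suppose m̂ ∈ M minimizes −‖ŝ_m‖² + (λ/n)·D_m over m ∈ M, and m₀ ∈ M minimizes ‖P_m s − s‖² + (λ/(Kn))·D_m over m ∈ M. Then (1 − (2/γ+1)/(K(1−γ)))·‖P_{m₀}s − s‖² ≤ (1 + (2/γ−1)/(K(1−γ)))·‖ŝ_{m̂} − s‖² + ((2/γ+1)/(K(1−γ)))·n^{−1}‖w_{m₀}‖² + (2γ/(K(1−γ)))·(λ/n)·D_{m₀}. -/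
open scoped RealInnerProductSpace

/-!
With `c = n^{-1/2}`, the criterion `-‖ŝ_m‖²` equals `‖ŝ_m - s‖² - 2cℓ(ŝ_m) - ‖s‖²`, so the
minimality of `m̂` compares the risks of `ŝ_m̂` and `ŝ_m₀` up to the cross term
`2c(ℓ(ŝ_m̂) - ℓ(ŝ_m₀))`. Both estimators lie in `m̂ ⊔ m₀`, where `ℓ` is represented by
`w_{m̂ ⊔ m₀}`, so the cross term is at most `2c‖w_{m̂ ⊔ m₀}‖(‖ŝ_m̂ - s‖ + ‖ŝ_m₀ - s‖)`; Young's
inequality with weight `γ` and the noise bound absorb it into the risks and penalties. This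
bounds the penalty of `m̂`, which is then fed into the oracle inequality defining `m₀`, using
Pythagoras `‖ŝ_m - s‖² = ‖P_m s - s‖² + ‖w_m‖² / n`.
-/

lemma Real.rpow_neg_one_half_sq {x : ℝ} (hx : 0 ≤ x) : (x ^ (-(1 / 2 : ℝ))) ^ 2 = x⁻¹ := by
  rw [← Real.rpow_natCast, ← Real.rpow_mul hx]
  norm_num [Real.rpow_neg_one]

lemma two_mul_le_young {γ : ℝ} (hγ : 0 < γ) (u v : ℝ) :
    2 * u * v ≤ 2 / γ * v ^ 2 + γ / 2 * u ^ 2 := by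
  have h := sq_nonneg (2 * v - γ * u)
  field_simp
  nlinarith

section
variable {H : Type*} [NormedAddCommGroup H] [InnerProductSpace ℝ H]
  {V : Submodule ℝ H} {s p w : H}

lemma norm_add_smul_sub_sq (hwV : w ∈ V) (hp : s - p ∈ Vᗮ) (c : ℝ) :
    ‖p + c • w - s‖ ^ 2 = ‖p - s‖ ^ 2 + c ^ 2 * ‖w‖ ^ 2 := by
  have h : ⟪p - s, w⟫ = 0 := by
    rw [← neg_sub, inner_neg_left, Submodule.inner_left_of_mem_orthogonal hwV hp, neg_zero]
  rw [add_sub_right_comm, norm_add_sq_real, real_inner_smul_right, h, norm_smul,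
    Real.norm_eq_abs, mul_pow, sq_abs]
  ring

lemma neg_norm_add_smul_sq {ℓ : H →ₗ[ℝ] ℝ} (hpV : p ∈ V) (hp : s - p ∈ Vᗮ) (hwV : w ∈ V)
    (hw : ∀ x ∈ V, ⟪w, x⟫ = ℓ x) (c : ℝ) :
    -‖p + c • w‖ ^ 2 = ‖p + c • w - s‖ ^ 2 - 2 * c * ℓ (p + c • w) - ‖s‖ ^ 2 := by
  have hx : p + c • w ∈ V := V.add_mem hpV (V.smul_mem c hwV)
  have hs : ⟪p + c • w, s⟫ = ⟪p + c • w, p⟫ := by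
    rw [← sub_eq_zero, ← inner_sub_right, Submodule.inner_right_of_mem_orthogonal hx hp]
  have hxx : ⟪p + c • w, p + c • w⟫ = ⟪p + c • w, p⟫ + c * ⟪w, p + c • w⟫ := by
    simp only [inner_add_left, inner_add_right, real_inner_smul_left, real_inner_smul_right,
      real_inner_comm p w]
    ring
  rw [← hw _ hx, norm_sub_sq_real, hs, ← real_inner_self_eq_norm_sq, hxx]
  ring

lemma LinearMap.sub_le_norm_mul_dist_add {ℓ : H →ₗ[ℝ] ℝ} (hw : ∀ x ∈ V, ⟪w, x⟫ = ℓ x)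
    {x y : H} (hx : x ∈ V) (hy : y ∈ V) (z : H) : ℓ x - ℓ y ≤ ‖w‖ * (‖x - z‖ + ‖y - z‖) := by
  rw [← map_sub, ← hw _ (V.sub_mem hx hy), norm_sub_rev y]
  exact (real_inner_le_norm _ _).trans <|
    mul_le_mul_of_nonneg_left (norm_sub_le_norm_sub_add_norm_sub x z y) (norm_nonneg w)

end

lemma absorb_cross_term {a b W ph p0 γ : ℝ} (hγ : 0 < γ) (hW : W ^ 2 ≤ ph + p0)
    (h : a ^ 2 + ph ≤ b ^ 2 + p0 + 2 * W * (a + b)) :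
    (1 - γ) * ph ≤ (2 / γ - 1) * a ^ 2 + (2 / γ + 1) * b ^ 2 + (1 + γ) * p0 := by
  have ha := two_mul_le_young hγ W a
  have hb := two_mul_le_young hγ W b
  have hγW := mul_le_mul_of_nonneg_left hW hγ.le
  linarith

lemma bias_bound_of_oracle {bias₀ biasHat riskHat var₀ dimHat dim₀ lam N K γ : ℝ}
    (hγ1 : γ < 1) (hK : 0 < K)
    (hpen : (1 - γ) * (lam / N * dimHat) ≤
      (2 / γ - 1) * riskHat + (2 / γ + 1) * (bias₀ + var₀) + (1 + γ) * (lam / N * dim₀))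
    (horacle : bias₀ + lam / (K * N) * dim₀ ≤ biasHat + lam / (K * N) * dimHat)
    (hbias : biasHat ≤ riskHat) :
    (1 - (2 / γ + 1) / (K * (1 - γ))) * bias₀ ≤
      (1 + (2 / γ - 1) / (K * (1 - γ))) * riskHat + (2 / γ + 1) / (K * (1 - γ)) * var₀ +
        2 * γ / (K * (1 - γ)) * (lam / N) * dim₀ := by
  have hγ1' : 0 < 1 - γ := sub_pos.2 hγ1
  have hscale : K * (lam / (K * N)) = lam / N := by
    rw [mul_div_assoc', mul_div_mul_left _ _ hK.ne']
  have horacle' : K * bias₀ + lam / N * dim₀ ≤ K * riskHat + lam / N * dimHat := by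
    have := mul_le_mul_of_nonneg_left horacle hK.le
    rw [mul_add, mul_add, ← mul_assoc, ← mul_assoc, hscale] at this
    linarith [mul_le_mul_of_nonneg_left hbias hK.le]
  have hQ : 0 < K * (1 - γ) := mul_pos hK hγ1'
  refine le_of_mul_le_mul_right ?_ hQ
  calc (1 - (2 / γ + 1) / (K * (1 - γ))) * bias₀ * (K * (1 - γ))
      = (K * (1 - γ) - (2 / γ + 1)) * bias₀ := by field_simp
    _ ≤ (K * (1 - γ) + (2 / γ - 1)) * riskHat + (2 / γ + 1) * var₀ +
          2 * γ * (lam / N * dim₀) := by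
      linarith [mul_le_mul_of_nonneg_left horacle' hγ1'.le]
    _ = _ := by field_simp

theorem stmt_2_general {H : Type*} [NormedAddCommGroup H] [InnerProductSpace ℝ H]
    (ℓ : H →ₗ[ℝ] ℝ) (s : H) (n : ℕ) (lam : ℝ)
    (M : Set (Submodule ℝ H)) (hfin : ∀ m ∈ M, FiniteDimensional ℝ m)
    -- `proj V` is the orthogonal projection of `s` onto `V`
    (proj : Submodule ℝ H → H)
    (hproj : ∀ V : Submodule ℝ H, FiniteDimensional ℝ V →
      proj V ∈ V ∧ s - proj V ∈ Vᗮ)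
    -- `w V` is the unique vector of `V` representing `ℓ` on `V`
    (w : Submodule ℝ H → H)
    (hw : ∀ V : Submodule ℝ H, FiniteDimensional ℝ V →
      w V ∈ V ∧ ∀ x ∈ V, ⟪w V, x⟫ = ℓ x)
    -- control of the noise on sums of pairs of models
    (hnoise : ∀ m ∈ M, ∀ m' ∈ M,
      ‖w (m ⊔ m')‖ ^ 2 ≤
        lam * ((Module.finrank ℝ m : ℝ) + (Module.finrank ℝ m' : ℝ)))
    (γ : ℝ) (hγ0 : 0 < γ) (hγ1 : γ < 1)
    (K : ℝ) (hK : 1 < K)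
    -- the least-squares estimators
    (shat : Submodule ℝ H → H)
    (hshat : ∀ m : Submodule ℝ H, shat m = proj m + ((n : ℝ) ^ (-(1 / 2 : ℝ))) • w m)
    -- `mhat` minimizes the penalized criterion
    (mhat : Submodule ℝ H) (hmhat : mhat ∈ M)
    (hminhat : ∀ m ∈ M,
      -‖shat mhat‖ ^ 2 + lam / n * (Module.finrank ℝ mhat : ℝ) ≤
        -‖shat m‖ ^ 2 + lam / n * (Module.finrank ℝ m : ℝ))
    -- `m₀` minimizes the deterministic criterion with penalty `λ/(Kn)`
    (m₀ : Submodule ℝ H) (hm₀ : m₀ ∈ M)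
    (hminm₀ : ∀ m ∈ M,
      ‖proj m₀ - s‖ ^ 2 + lam / (K * n) * (Module.finrank ℝ m₀ : ℝ) ≤
        ‖proj m - s‖ ^ 2 + lam / (K * n) * (Module.finrank ℝ m : ℝ)) :
    (1 - (2 / γ + 1) / (K * (1 - γ))) * ‖proj m₀ - s‖ ^ 2 ≤
      (1 + (2 / γ - 1) / (K * (1 - γ))) * ‖shat mhat - s‖ ^ 2 +
        (2 / γ + 1) / (K * (1 - γ)) * ((n : ℝ)⁻¹ * ‖w m₀‖ ^ 2) +
        2 * γ / (K * (1 - γ)) * (lam / n) * (Module.finrank ℝ m₀ : ℝ) := by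
  have := hfin mhat hmhat
  have := hfin m₀ hm₀
  obtain ⟨hph, hoh⟩ := hproj mhat ‹_›
  obtain ⟨hp0, ho0⟩ := hproj m₀ ‹_›
  obtain ⟨hwh, hwhℓ⟩ := hw mhat ‹_›
  obtain ⟨hw0, hw0ℓ⟩ := hw m₀ ‹_›
  obtain ⟨-, hwVℓ⟩ := hw (mhat ⊔ m₀) inferInstance
  set c := (n : ℝ) ^ (-(1 / 2 : ℝ))
  have hc : c ^ 2 = (n : ℝ)⁻¹ := Real.rpow_neg_one_half_sq n.cast_nonneg
  have hc0 : 0 ≤ c := Real.rpow_nonneg n.cast_nonneg _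
  simp only [hshat] at hminhat ⊢
  have hcrit := hminhat m₀ hm₀
  rw [neg_norm_add_smul_sq hph hoh hwh hwhℓ, neg_norm_add_smul_sq hp0 ho0 hw0 hw0ℓ] at hcrit
  set xh := proj mhat + c • w mhat
  set x0 := proj m₀ + c • w m₀
  have hincr : ℓ xh - ℓ x0 ≤ ‖w (mhat ⊔ m₀)‖ * (‖xh - s‖ + ‖x0 - s‖) :=
    LinearMap.sub_le_norm_mul_dist_add hwVℓ
      (Submodule.mem_sup_left (add_mem hph (Submodule.smul_mem _ c hwh)))
      (Submodule.mem_sup_right (add_mem hp0 (Submodule.smul_mem _ c hw0))) s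
  have hW : (c * ‖w (mhat ⊔ m₀)‖) ^ 2 ≤
      lam / n * (Module.finrank ℝ mhat : ℝ) + lam / n * (Module.finrank ℝ m₀ : ℝ) := by
    rw [mul_pow, hc, ← mul_add, div_eq_inv_mul, mul_assoc]
    exact mul_le_mul_of_nonneg_left (hnoise mhat hmhat m₀ hm₀) (by positivity)
  have hpen := absorb_cross_term (a := ‖xh - s‖) (b := ‖x0 - s‖) hγ0 hW
    (by linarith [mul_le_mul_of_nonneg_left hincr hc0])
  rw [norm_add_smul_sub_sq hw0 ho0, hc] at hpen
  refine bias_bound_of_oracle hγ1 (by linarith) hpen (hminm₀ mhat hmhat) ?_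
  rw [norm_add_smul_sub_sq hwh hoh]
  exact le_add_of_nonneg_right (by positivity)

/-- the deterministic core of Lemma 2: bound on `‖P_{m₀} s - s‖²` on the
event where the noise projections are controlled. -/
theorem stmt_2 {H : Type*} [NormedAddCommGroup H] [InnerProductSpace ℝ H]
    (ℓ : H →ₗ[ℝ] ℝ) (s : H) (n : ℕ) (hn : 1 ≤ n) (lam : ℝ) (hlam : 0 < lam)
    (M : Set (Submodule ℝ H)) (hfin : ∀ m ∈ M, FiniteDimensional ℝ m)
    -- `proj V` is the orthogonal projection of `s` onto `V`
    (proj : Submodule ℝ H → H)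
    (hproj : ∀ V : Submodule ℝ H, FiniteDimensional ℝ V →
      proj V ∈ V ∧ s - proj V ∈ Vᗮ)
    -- `w V` is the unique vector of `V` representing `ℓ` on `V`
    (w : Submodule ℝ H → H)
    (hw : ∀ V : Submodule ℝ H, FiniteDimensional ℝ V →
      w V ∈ V ∧ ∀ x ∈ V, ⟪w V, x⟫ = ℓ x)
    -- control of the noise on sums of pairs of models
    (hnoise : ∀ m ∈ M, ∀ m' ∈ M,
      ‖w (m ⊔ m')‖ ^ 2 ≤
        lam * ((Module.finrank ℝ m : ℝ) + (Module.finrank ℝ m' : ℝ)))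
    (γ : ℝ) (hγ0 : 0 < γ) (hγ1 : γ < 1)
    (K : ℝ) (hK : 1 < K) (hKγ : 2 / γ + 1 < K * (1 - γ))
    -- the least-squares estimators
    (shat : Submodule ℝ H → H)
    (hshat : ∀ m : Submodule ℝ H, shat m = proj m + ((n : ℝ) ^ (-(1 / 2 : ℝ))) • w m)
    -- `mhat` minimizes the penalized criterion
    (mhat : Submodule ℝ H) (hmhat : mhat ∈ M)
    (hminhat : ∀ m ∈ M,
      -‖shat mhat‖ ^ 2 + lam / n * (Module.finrank ℝ mhat : ℝ) ≤
        -‖shat m‖ ^ 2 + lam / n * (Module.finrank ℝ m : ℝ))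
    -- `m₀` minimizes the deterministic criterion with penalty `λ/(Kn)`
    (m₀ : Submodule ℝ H) (hm₀ : m₀ ∈ M)
    (hminm₀ : ∀ m ∈ M,
      ‖proj m₀ - s‖ ^ 2 + lam / (K * n) * (Module.finrank ℝ m₀ : ℝ) ≤
        ‖proj m - s‖ ^ 2 + lam / (K * n) * (Module.finrank ℝ m : ℝ)) :
    (1 - (2 / γ + 1) / (K * (1 - γ))) * ‖proj m₀ - s‖ ^ 2 ≤
      (1 + (2 / γ - 1) / (K * (1 - γ))) * ‖shat mhat - s‖ ^ 2 +
        (2 / γ + 1) / (K * (1 - γ)) * ((n : ℝ)⁻¹ * ‖w m₀‖ ^ 2) +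
        2 * γ / (K * (1 - γ)) * (lam / n) * (Module.finrank ℝ m₀ : ℝ) :=
  stmt_2_general ℓ s n lam M hfin proj hproj w hw hnoise γ hγ0 hγ1 K hK shat hshat mhat hmhat
    hminhat m₀ hm₀ hminm₀
end

section
/- Let α > 0 and θ > 2. The coefficient array β defined by β_{j,0} = 2^{−√j} for every j ∈ ℕ and β_{j,k} = 0 for k ≠ 0 is square-summable and satisfies the condition A^α_θ. -/
/-!
Only `β_{j,0}` is nonzero, so `t_{j,J}(β)` vanishes as soon as `N(J,j) ≥ 1`, and is at most
`β_{j,0}² ≤ 2^{-√j}` otherwise. But `N(J,j) = 0` forces `2^J ≤ j^θ`, so on the surviving levels the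
weight `2^{2Jα}` is at most `j^{2αθ}`, and all the weighted sums are bounded, uniformly in `J`, by
`Σ_j j^{2αθ} 2^{-√j}`, which converges because `2^{-√j}` decays faster than any power of `j`.
-/

open scoped BigOperators

/-- A coefficient array `β` is square-summable if `Σ_{j,k} β_{j,k}² < ∞`. -/
def SqSummable (β : ℕ → ℕ → ℝ) : Prop :=
  Summable fun j : ℕ => ∑ k ∈ Finset.range (2 ^ j), (β j k) ^ 2

/-- `N(J,j) = min(⌊2^J (j−J+1)^{−θ}⌋, 2^j)`. -/
noncomputable def NJj (θ : ℝ) (J j : ℕ) : ℕ :=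
  min ⌊(2 : ℝ) ^ J * ((j : ℝ) - (J : ℝ) + 1) ^ (-θ)⌋₊ (2 ^ j)

/-- `t_{j,J}(β)`: the minimum over subsets `A` of `{0,…,2^j−1}` of cardinality `N(J,j)`
of `Σ_{k ∉ A} β_{j,k}²`, i.e. the sum of squares of all but the `N(J,j)` largest
`|β_{j,k}|` at level `j`. -/
noncomputable def tTail (β : ℕ → ℕ → ℝ) (θ : ℝ) (J j : ℕ) : ℝ :=
  sInf {x : ℝ | ∃ A : Finset ℕ, A ⊆ Finset.range (2 ^ j) ∧ A.card = NJj θ J j ∧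
    x = ∑ k ∈ Finset.range (2 ^ j) \ A, (β j k) ^ 2}

/-- The condition `A^α_θ`. -/
def CondA (β : ℕ → ℕ → ℝ) (α θ : ℝ) : Prop :=
  ∃ C : ℝ, ∀ J : ℕ,
    (2 : ℝ) ^ (2 * (J : ℝ) * α) *
      ∑' j : ℕ, (if J ≤ j then tTail β θ J j else 0) ≤ C

open Filter Asymptotics Finset

theorem summable_rpow_mul_rpow_neg_sqrt (p : ℝ) {b : ℝ} (hb : 1 < b) :
    Summable fun n : ℕ => (n : ℝ) ^ p * b ^ (-√n) := by
  have hlog : 0 < Real.log b := Real.log_pos hb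
  have hdecay : Tendsto (fun n : ℕ => (n : ℝ) ^ (p + 2) * b ^ (-√n)) atTop (nhds 0) := by
    have h := (tendsto_rpow_mul_exp_neg_mul_atTop_nhds_zero (2 * (p + 2)) _ hlog).comp
      (Real.tendsto_sqrt_atTop.comp tendsto_natCast_atTop_atTop)
    refine h.congr fun n => ?_
    simp only [Function.comp_apply]
    congr 1
    · rw [Real.sqrt_eq_rpow, ← Real.rpow_mul n.cast_nonneg]
      ring_nf
    · rw [Real.rpow_def_of_pos (by linarith)]
      ring_nf
  have hbigO : (fun n : ℕ => (n : ℝ) ^ p * b ^ (-√n)) =O[atTop]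
      fun n : ℕ => (n : ℝ) ^ (-2 : ℝ) * 1 := by
    refine ((isBigO_refl (fun n : ℕ => (n : ℝ) ^ (-2 : ℝ)) atTop).mul
      (hdecay.isBigO_one (F := ℝ))).congr' ?_ (by simp)
    filter_upwards [eventually_gt_atTop 0] with n hn
    rw [← mul_assoc, ← Real.rpow_add (by exact_mod_cast hn)]
    ring_nf
  exact summable_of_isBigO_nat (by simp) hbigO

theorem tTail_nonneg (β : ℕ → ℕ → ℝ) (θ : ℝ) (J j : ℕ) : 0 ≤ tTail β θ J j :=
  Real.sInf_nonneg <| by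
    rintro _ ⟨A, -, -, rfl⟩
    exact sum_nonneg fun k _ => sq_nonneg _

theorem tTail_le_sum_sdiff_range (β : ℕ → ℕ → ℝ) (θ : ℝ) (J j : ℕ) :
    tTail β θ J j ≤ ∑ k ∈ range (2 ^ j) \ range (NJj θ J j), β j k ^ 2 := by
  refine csInf_le ⟨0, ?_⟩ ⟨range (NJj θ J j), range_subset_range.mpr (min_le_right _ _),
    card_range _, rfl⟩
  rintro _ ⟨A, -, -, rfl⟩
  exact sum_nonneg fun k _ => sq_nonneg _

theorem tTail_eq_zero_of_forall_ge {β : ℕ → ℕ → ℝ} {θ : ℝ} {J j : ℕ}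
    (h : ∀ k, NJj θ J j ≤ k → β j k = 0) : tTail β θ J j = 0 := by
  refine le_antisymm ?_ (tTail_nonneg β θ J j)
  refine (tTail_le_sum_sdiff_range β θ J j).trans_eq (sum_eq_zero fun k hk => ?_)
  rw [h k (by simpa using (mem_sdiff.mp hk).2), sq, zero_mul]

theorem sum_range_sq_eq_sq_zero {β : ℕ → ℕ → ℝ} {j : ℕ} (h : ∀ k, k ≠ 0 → β j k = 0) :
    ∑ k ∈ range (2 ^ j), β j k ^ 2 = β j 0 ^ 2 :=
  sum_eq_single_of_mem 0 (mem_range.mpr (Nat.two_pow_pos j)) fun k _ hk => by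
    rw [h k hk, sq, zero_mul]

theorem two_pow_le_rpow_of_NJj_eq_zero {θ : ℝ} (hθ : 0 ≤ θ) {J j : ℕ} (hJj : J ≤ j)
    (h : NJj θ J j = 0) : (2 : ℝ) ^ J ≤ (j : ℝ) ^ θ := by
  set u : ℝ := (j : ℝ) - J + 1 with hu_def
  have hu : 1 ≤ u := by
    have : (J : ℝ) ≤ j := by exact_mod_cast hJj
    linarith
  have hfloor : ⌊(2 : ℝ) ^ J * u ^ (-θ)⌋₊ = 0 :=
    (Nat.min_eq_zero_iff.mp h).resolve_right (Nat.two_pow_pos j).ne'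
  have hlt : (2 : ℝ) ^ J < u ^ θ := by
    have := Nat.floor_eq_zero.mp hfloor
    rwa [Real.rpow_neg (by linarith), mul_inv_lt_iff₀ (by positivity), one_mul] at this
  have hu_gt : 1 < u := by
    by_contra! hu1
    exact (hlt.trans_le (Real.rpow_le_one (by linarith) hu1 hθ)).not_ge (one_le_pow₀ one_le_two)
  have hj : 0 < j := by
    have : (J : ℝ) < j := by linarith
    exact_mod_cast J.cast_nonneg.trans_lt this
  rcases J.eq_zero_or_pos with rfl | hJ
  · simpa using Real.one_le_rpow (Nat.one_le_cast.mpr hj) hθ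
  · have hu_le : u ≤ j := by
      have : (1 : ℝ) ≤ J := by exact_mod_cast hJ
      linarith
    exact (hlt.trans_le (Real.rpow_le_rpow (by linarith) hu_le hθ)).le

theorem two_rpow_mul_tTail_le {α θ : ℝ} (hα : 0 ≤ α) (hθ : 0 ≤ θ) {β : ℕ → ℕ → ℝ} {J j : ℕ}
    (hβ : ∀ k, k ≠ 0 → β j k = 0) (hJj : J ≤ j) :
    (2 : ℝ) ^ (2 * (J : ℝ) * α) * tTail β θ J j ≤ (j : ℝ) ^ (2 * α * θ) * β j 0 ^ 2 := by
  by_cases hN : NJj θ J j = 0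
  · have htail : tTail β θ J j ≤ β j 0 ^ 2 := by
      simpa [hN, sum_range_sq_eq_sq_zero hβ] using tTail_le_sum_sdiff_range β θ J j
    have hweight : (2 : ℝ) ^ (2 * (J : ℝ) * α) ≤ (j : ℝ) ^ (2 * α * θ) := by
      calc (2 : ℝ) ^ (2 * (J : ℝ) * α) = ((2 : ℝ) ^ J) ^ (2 * α) := by
            rw [← Real.rpow_natCast, ← Real.rpow_mul zero_le_two]; ring_nf
        _ ≤ ((j : ℝ) ^ θ) ^ (2 * α) :=
            Real.rpow_le_rpow (by positivity) (two_pow_le_rpow_of_NJj_eq_zero hθ hJj hN)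
              (by positivity)
        _ = (j : ℝ) ^ (2 * α * θ) := by
            rw [← Real.rpow_mul j.cast_nonneg]; ring_nf
    exact mul_le_mul hweight htail (tTail_nonneg β θ J j) (by positivity)
  · rw [tTail_eq_zero_of_forall_ge fun k hk => hβ k (by omega), mul_zero]
    positivity

/-- the array `β_{j,0} = 2^{−√j}`, `β_{j,k} = 0` for `k ≠ 0`, is
square-summable and satisfies the condition `A^α_θ`. -/
theorem stmt_9 (α θ : ℝ) (hα : 0 < α) (hθ : 2 < θ)
    (β : ℕ → ℕ → ℝ)
    (hβdef : ∀ j k : ℕ, β j k = if k = 0 then (2 : ℝ) ^ (-Real.sqrt j) else 0) :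
    SqSummable β ∧ CondA β α θ := by
  have hsupp : ∀ j k, k ≠ 0 → β j k = 0 := fun j k hk => by simp [hβdef, hk]
  have hβ0 : ∀ j : ℕ, β j 0 ^ 2 ≤ (2 : ℝ) ^ (-√j) := fun j => by
    rw [hβdef, if_pos rfl]
    exact pow_le_of_le_one (by positivity)
      (Real.rpow_le_one_of_one_le_of_nonpos one_le_two (by simp)) two_ne_zero
  set g : ℕ → ℝ := fun j => (j : ℝ) ^ (2 * α * θ) * (2 : ℝ) ^ (-√j)
  have hg : Summable g := summable_rpow_mul_rpow_neg_sqrt _ one_lt_two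
  refine ⟨?_, ⟨∑' j, g j, fun J => ?_⟩⟩
  · refine .of_nonneg_of_le (fun j => sum_nonneg fun k _ => sq_nonneg _) (fun j => ?_)
      (by simpa using summable_rpow_mul_rpow_neg_sqrt 0 one_lt_two)
    simpa [sum_range_sq_eq_sq_zero (hsupp j)] using hβ0 j
  · have hterm : ∀ j, (2 : ℝ) ^ (2 * (J : ℝ) * α) * (if J ≤ j then tTail β θ J j else 0) ≤ g j := by
      intro j
      split_ifs with hJj
      · exact (two_rpow_mul_tTail_le hα.le (by linarith) (hsupp j) hJj).trans
          (mul_le_mul_of_nonneg_left (hβ0 j) (by positivity))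
      · simp only [mul_zero, g]
        positivity
    have hnonneg : ∀ j, 0 ≤ (if J ≤ j then tTail β θ J j else 0) := fun j => by
      split_ifs
      exacts [tTail_nonneg β θ J j, le_rfl]
    rw [← tsum_mul_left]
    exact Summable.tsum_le_tsum hterm
      (.of_nonneg_of_le (fun j => mul_nonneg (by positivity) (hnonneg j)) hterm hg) hg
end
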